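/- arXiv:1307.5781 — 3 statements merged into one kernel-verified Lean document; each statement's English description precedes it below -/
import Mathlib

section
/- There is no cyclic sequence of compressions: there do not exist finite simple graphs G_0, G_1, ..., G_t with t ≥ 1, G_t isomorphic to G_0, such that for each 0 ≤ i < t, G_{i+1} = C_{x_i y_i}(G_i) for some distinct vertices x_i, y_i and G_{i+1} is not isomorphic to G_i. Consequently, the non-isomorphic compression relation generates a strict partial order on the isomorphism classes of graphs with n vertices and m edges. -/
/-!
The potential `∑ v, deg v ^ 2` strictly increases under every compression that changes the
isomorphism type, so it cannot return to its initial value. The compression `C_{xy}` moves the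
set `M = N(x) \ N[y]` from `x` to `y`; every other vertex keeps its degree, since a vertex of
`M` trades its neighbour `x` for `y`. If `M = ∅` then `C_{xy}(G) = G`, and if
`N(y) \ {x} ⊆ N(x)` the transposition of `x` and `y` is an isomorphism `C_{xy}(G) ≅ G`.
Otherwise the new degree `deg x - |M|` of `x` is less than `deg y`, so shifting `|M| ≥ 1` from
`deg x` to `deg y` increases `deg x ^ 2 + deg y ^ 2`.
-/

open SimpleGraph

/-- The compression `C_{xy}(G)`: every edge `{x,v}` of `G` with `v ≠ y` and `v` not adjacent
to `y` in `G` is replaced by the edge `{y,v}`; all other edges are unchanged. -/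
def compress {V : Type*} (G : SimpleGraph V) (x y : V) : SimpleGraph V where
  Adj a b :=
    (G.Adj a b ∧ ¬ ((a = x ∧ b ≠ y ∧ ¬ G.Adj y b) ∨ (b = x ∧ a ≠ y ∧ ¬ G.Adj y a))) ∨
    (a = y ∧ b ≠ y ∧ G.Adj x b ∧ ¬ G.Adj y b) ∨
    (b = y ∧ a ≠ y ∧ G.Adj x a ∧ ¬ G.Adj y a)
  symm := by
    constructor
    intro a b h
    rcases h with ⟨hab, hn⟩ | h | h
    · exact Or.inl ⟨hab.symm, fun hc => hn hc.symm⟩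
    · exact Or.inr (Or.inr h)
    · exact Or.inr (Or.inl h)
  loopless := by
    constructor
    intro a h
    rcases h with ⟨hab, _⟩ | ⟨_, h, _⟩ | ⟨_, h, _⟩
    · exact G.irrefl hab
    · exact h ‹_›
    · exact h ‹_›

section Compression

variable {V : Type*} {G : SimpleGraph V} {x y : V}

theorem compress_adj {a b : V} :
    (compress G x y).Adj a b ↔
      (G.Adj a b ∧ ¬ ((a = x ∧ b ≠ y ∧ ¬ G.Adj y b) ∨ (b = x ∧ a ≠ y ∧ ¬ G.Adj y a))) ∨
      (a = y ∧ b ≠ y ∧ G.Adj x b ∧ ¬ G.Adj y b) ∨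
      (b = y ∧ a ≠ y ∧ G.Adj x a ∧ ¬ G.Adj y a) := Iff.rfl

theorem compress_eq_self (h : ∀ v, G.Adj x v → v ≠ y → G.Adj y v) : compress G x y = G := by
  ext a b
  grind [compress_adj, G.adj_comm]

theorem compress_adj_iff_adj_swap [DecidableEq V] (h : ∀ v, G.Adj y v → v ≠ x → G.Adj x v)
    (a b : V) : (compress G x y).Adj a b ↔ G.Adj (Equiv.swap x y a) (Equiv.swap x y b) := by
  simp only [compress_adj, Equiv.swap_apply_def]
  split_ifs <;> grind [G.adj_comm, G.irrefl]

theorem neighborSet_compress_left :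
    (compress G x y).neighborSet x = G.neighborSet x ∩ insert y (G.neighborSet y) := by
  ext b
  simp only [mem_neighborSet, compress_adj, Set.mem_inter_iff, Set.mem_insert_iff]
  grind [G.irrefl]

theorem neighborSet_compress_right :
    (compress G x y).neighborSet y =
      G.neighborSet y ∪ (G.neighborSet x \ insert y (G.neighborSet y)) := by
  ext b
  simp only [mem_neighborSet, compress_adj, Set.mem_union, Set.mem_sdiff, Set.mem_insert_iff]
  grind [G.irrefl]

theorem neighborSet_compress_of_moved [DecidableEq V] {v : V} (hvy : v ≠ y) (hxv : G.Adj x v)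
    (hyv : ¬ G.Adj y v) :
    (compress G x y).neighborSet v = Equiv.swap x y ⁻¹' G.neighborSet v := by
  ext b
  simp only [mem_neighborSet, compress_adj, Set.mem_preimage, Equiv.swap_apply_def]
  split_ifs <;> grind [G.adj_comm, G.irrefl]

theorem neighborSet_compress_of_not_moved {v : V} (hvx : v ≠ x) (hvy : v ≠ y)
    (hv : G.Adj x v → G.Adj y v) : (compress G x y).neighborSet v = G.neighborSet v := by
  ext b
  simp only [mem_neighborSet, compress_adj]
  grind [G.adj_comm, G.irrefl]

theorem ncard_neighborSet_compress_of_ne [Finite V] {v : V} (hvx : v ≠ x) (hvy : v ≠ y) :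
    ((compress G x y).neighborSet v).ncard = (G.neighborSet v).ncard := by
  classical
  by_cases hv : G.Adj x v ∧ ¬ G.Adj y v
  · rw [neighborSet_compress_of_moved hvy hv.1 hv.2,
      Set.ncard_preimage_of_injective_subset_range (Equiv.injective _) (by simp)]
  · rw [neighborSet_compress_of_not_moved hvx hvy (by tauto)]

theorem ncard_neighborSet_compress_left_add [Finite V] :
    ((compress G x y).neighborSet x).ncard +
      (G.neighborSet x \ insert y (G.neighborSet y)).ncard = (G.neighborSet x).ncard := by
  rw [neighborSet_compress_left, Set.ncard_inter_add_ncard_sdiff_eq_ncard]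

theorem ncard_neighborSet_compress_right [Finite V] :
    ((compress G x y).neighborSet y).ncard =
      (G.neighborSet y).ncard + (G.neighborSet x \ insert y (G.neighborSet y)).ncard := by
  rw [neighborSet_compress_right, Set.ncard_union_eq]
  exact Set.disjoint_left.2 fun _ hyb hb ↦ hb.2 (.inr hyb)

theorem ncard_neighborSet_compress_left_lt [Finite V] [DecidableEq V] {b : V}
    (hyb : G.Adj y b) (hbx : b ≠ x) (hxb : ¬ G.Adj x b) :
    ((compress G x y).neighborSet x).ncard < (G.neighborSet y).ncard := by
  rw [neighborSet_compress_left, ← Set.ncard_image_of_injective _ (Equiv.swap x y).injective]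
  refine Set.ncard_lt_ncard (Set.ssubset_iff_of_subset ?_ |>.2 ⟨b, hyb, ?_⟩)
  · rintro _ ⟨c, ⟨hxc, rfl | hyc⟩, rfl⟩
    · simpa using hxc.symm
    · rwa [Equiv.swap_apply_of_ne_of_ne hxc.ne' hyc.ne']
  · rintro ⟨c, ⟨hxc, -⟩, rfl⟩
    rcases eq_or_ne c y with rfl | hcy
    · simp at hbx
    · exact hxb (by rwa [Equiv.swap_apply_of_ne_of_ne hxc.ne' hcy])

end Compression

theorem Finset.sum_lt_sum_of_lt_on_pair {ι M : Type*} [Fintype ι] [DecidableEq ι]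
    [AddCommMonoid M] [PartialOrder M] [IsOrderedCancelAddMonoid M] {f g : ι → M} {i j : ι}
    (hij : i ≠ j) (hfg : ∀ k, k ≠ i → k ≠ j → f k = g k) (hlt : f i + f j < g i + g j) :
    ∑ k, f k < ∑ k, g k := by
  rw [← Finset.sum_add_sum_compl {i, j}, ← Finset.sum_add_sum_compl {i, j} g,
    Finset.sum_pair hij, Finset.sum_pair hij,
    Finset.sum_congr rfl fun k hk ↦ hfg k (by simp_all) (by simp_all)]
  exact add_lt_add_left hlt _

theorem Nat.sq_add_sq_lt_sq_add_sq {a b c d k : ℕ} (hc : c + k = a) (hd : d = b + k)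
    (hcb : c < b) (hk : 0 < k) : a ^ 2 + b ^ 2 < c ^ 2 + d ^ 2 := by
  subst hc hd
  nlinarith

namespace SimpleGraph

variable {V : Type*}

noncomputable def sumSqDegrees [Fintype V] (G : SimpleGraph V) : ℕ :=
  ∑ v, (G.neighborSet v).ncard ^ 2

theorem Iso.sumSqDegrees_eq [Fintype V] {G H : SimpleGraph V} (e : G ≃g H) :
    G.sumSqDegrees = H.sumSqDegrees :=
  Fintype.sum_equiv e.toEquiv _ _ fun v ↦ by rw [Set.ncard_congr' (e.mapNeighborSet v)]; rfl

theorem sumSqDegrees_lt_sumSqDegrees_compress [Fintype V] {G : SimpleGraph V} {x y : V}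
    (hxy : x ≠ y) (hne : ¬ Nonempty (compress G x y ≃g G)) :
    G.sumSqDegrees < (compress G x y).sumSqDegrees := by
  classical
  obtain ⟨w, hxw, hwy, hyw⟩ : ∃ w, G.Adj x w ∧ w ≠ y ∧ ¬ G.Adj y w := by
    by_contra! h
    exact hne ⟨by rw [compress_eq_self h]⟩
  obtain ⟨b, hyb, hbx, hxb⟩ : ∃ b, G.Adj y b ∧ b ≠ x ∧ ¬ G.Adj x b := by
    by_contra! h
    exact hne ⟨⟨Equiv.swap x y, (compress_adj_iff_adj_swap h _ _).symm⟩⟩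
  have hmoved : 0 < (G.neighborSet x \ insert y (G.neighborSet y)).ncard :=
    (Set.ncard_pos (Set.toFinite _)).2 ⟨w, hxw, by simp [hwy, hyw]⟩
  refine Finset.sum_lt_sum_of_lt_on_pair hxy
    (fun v hvx hvy ↦ by rw [ncard_neighborSet_compress_of_ne hvx hvy]) ?_
  exact Nat.sq_add_sq_lt_sq_add_sq ncard_neighborSet_compress_left_add
    ncard_neighborSet_compress_right (ncard_neighborSet_compress_left_lt hyb hbx hxb) hmoved

end SimpleGraph

/-- There is no cyclic sequence of non-isomorphic compressions: if each `G_{i+1}` is obtained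
from `G_i` by a compression `C_{x_i y_i}` (with `x_i ≠ y_i`) and is not isomorphic to `G_i`,
for `0 ≤ i < t` with `t ≥ 1`, then `G_t` is not isomorphic to `G_0`.  Consequently the
non-isomorphic compression relation generates a strict partial order on isomorphism classes of
graphs with given numbers of vertices and edges. -/
theorem no_cyclic_sequence_of_compressions {V : Type*} [Fintype V] (t : ℕ) (ht : 1 ≤ t)
    (Gs : ℕ → SimpleGraph V) (x y : ℕ → V)
    (hstep : ∀ i < t, x i ≠ y i ∧ Gs (i + 1) = compress (Gs i) (x i) (y i) ∧
      ¬ Nonempty (Gs (i + 1) ≃g Gs i)) :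
    ¬ Nonempty (Gs t ≃g Gs 0) := by
  rintro ⟨e⟩
  have hmono : StrictMonoOn (fun i ↦ (Gs i).sumSqDegrees) (Set.Iic t) :=
    strictMonoOn_Iic_of_lt_succ fun i hi ↦ by
      obtain ⟨hxy, hcomp, hne⟩ := hstep i hi
      simp only [Order.succ_eq_add_one, hcomp]
      exact sumSqDegrees_lt_sumSqDegrees_compress hxy (hcomp ▸ hne)
  exact (hmono (Set.mem_Iic.2 t.zero_le) Set.self_mem_Iic ht).ne e.sumSqDegrees_eq.symm
end

section
/- Let G = H(k, n_0, ..., n_{k-1}) with Σ_{i=1}^{k-1} n_i ≥ 2, and let G' be the consolidation of G. Then the number of acyclic orientations strictly decreases: a(G') < a(G). -/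
open SimpleGraph

def graphH (k : ℕ) (ns : ℕ → ℕ) :
    SimpleGraph (Fin k ⊕ Σ i : Fin k, Fin (ns i.val)) where
  Adj a b :=
    match a, b with
    | Sum.inl u, Sum.inl v => u ≠ v
    | Sum.inl u, Sum.inr p => u.val < p.1.val
    | Sum.inr p, Sum.inl u => u.val < p.1.val
    | Sum.inr _, Sum.inr _ => False
  symm := by
    constructor
    rintro (u | p) (v | q) h
    · exact h.symm
    · exact h
    · exact h
    · exact h
  loopless := by
    constructor
    rintro (u | p) h
    · exact h rfl
    · exact h

/-- The clique size of the consolidation of `H(k, n_0, …, n_{k-1})` with largest relevant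
index `l`: if `l = k - 1` the vertex receiving degree `k` is absorbed into the clique. -/
def consolK (k l : ℕ) : ℕ := if l = k - 1 then k + 1 else k

/-- The degree sequence of the consolidation: `n_s` and `n_l` are decreased by one and
`n_{s-1}` and `n_{l+1}` are increased by one (no vertex of degree `l + 1 = k` is recorded,
since such a vertex is absorbed into the clique). -/
def consolNs (k : ℕ) (ns : ℕ → ℕ) (s l : ℕ) : ℕ → ℕ := fun i =>
  (if i = s - 1 then 1 else 0) + (if l + 1 < k ∧ i = l + 1 then 1 else 0) + ns i
    - (if i = s then 1 else 0) - (if i = l then 1 else 0)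

/-- The data of a nontrivial consolidation move on `H(k, n_0, …, n_{k-1})`:  `k ≥ 1`, only
`n_0, …, n_{k-1}` are (possibly) nonzero, `Σ_{i=1}^{k-1} n_i ≥ 2`, `s` is the least index
`i ≥ 1` with `n_i > 0`, and `l` is the greatest index `i ≤ k - 1` with `n_i > 0`. -/
def IsConsolData (k : ℕ) (ns : ℕ → ℕ) (s l : ℕ) : Prop :=
  1 ≤ k ∧ (∀ i, k ≤ i → ns i = 0) ∧ 2 ≤ ∑ i ∈ Finset.Ico 1 k, ns i ∧
    1 ≤ s ∧ ns s ≠ 0 ∧ (∀ i, 1 ≤ i → i < s → ns i = 0) ∧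
    ns l ≠ 0 ∧ (∀ i, l < i → i < k → ns i = 0)

/-- An orientation of a simple graph `G`: a relation `θ` on the vertices such that for adjacent
vertices exactly one of `θ a b`, `θ b a` holds, and for non-adjacent (or equal) vertices
neither holds. -/
def IsOrientation {V : Type*} (G : SimpleGraph V) (θ : V → V → Prop) : Prop :=
  ∀ a b : V, (G.Adj a b → (θ a b ↔ ¬ θ b a)) ∧ (¬ G.Adj a b → ¬ θ a b)

/-- A relation is acyclic if its digraph has no directed cycle, i.e. its transitive closure is
irreflexive. -/
def RelAcyclic {V : Type*} (θ : V → V → Prop) : Prop :=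
  ∀ v, ¬ Relation.TransGen θ v v

/-- `a(G)`, the number of acyclic orientations of `G`. -/
noncomputable def numAcyclicOrientations {V : Type*} (G : SimpleGraph V) : ℕ :=
  Nat.card {θ : V → V → Prop // IsOrientation G θ ∧ RelAcyclic θ}


/-!
An acyclic orientation of a split graph (a clique on `α`, an independent set `β`, each `p : β`
adjacent to `N p ⊆ α`) amounts to a linear order of the clique together with, for each `p`, the
set of in-neighbours of `p`, which has to be an initial segment of `N p`; there are `#(N p) + 1`
of these whatever the order. Hence
`a(H(k, n)) = k! ∏_{i<k} (i+1)^{n_i} = ∏_{i<k} (i+1)^{n_i+1}`: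
the clique vertex `v_{i+1}` weighs like an extra vertex of degree `i`, so absorbing a vertex into
the clique is invisible in this product. Consolidation therefore multiplies `a` by
`s (l+2) / ((s+1) (l+1)) < 1`.
-/

open Finset Function

section Acyclic

variable {V : Type*} {θ : V → V → Prop} {a b c : V}

theorem RelAcyclic.irrefl (h : RelAcyclic θ) (a : V) : ¬ θ a a :=
  fun haa => h a (.single haa)

theorem RelAcyclic.asymm (h : RelAcyclic θ) (hab : θ a b) : ¬ θ b a :=
  fun hba => h a (.head hab (.single hba))

theorem RelAcyclic.not_rel_of_rel_of_rel (h : RelAcyclic θ) (hab : θ a b) (hbc : θ b c) :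
    ¬ θ c a :=
  fun hca => h a (.head hab (.head hbc (.single hca)))

theorem relAcyclic_of_rel_imp_lt {γ : Type*} [Preorder γ] (f : V → γ)
    (hf : ∀ a b, θ a b → f a < f b) : RelAcyclic θ := fun v hv => by
  have hlt := Relation.TransGen.lift f hf v v hv
  rw [Function.onFun, Relation.transGen_eq_self] at hlt
  exact lt_irrefl _ hlt

variable {G : SimpleGraph V}

theorem IsOrientation.adj (hθ : IsOrientation G θ) (hab : θ a b) : G.Adj a b :=
  by_contra fun hn => (hθ a b).2 hn hab

theorem IsOrientation.rel_of_not_rel (hθ : IsOrientation G θ) (hab : G.Adj a b) (h : ¬ θ a b) :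
    θ b a :=
  by_contra fun hba => h (((hθ a b).1 hab).2 hba)

end Acyclic

section FinEquiv

variable {α : Type*}

theorem exists_equiv_fin_lt_iff [Fintype α] (r : α → α → Prop) [IsStrictTotalOrder α r] :
    ∃ σ : α ≃ Fin (Fintype.card α), ∀ u v, σ u < σ v ↔ r u v := by
  classical
  let := linearOrderOfSTO r
  exact ⟨(Fintype.orderIsoFinOfCardEq α rfl).symm.toEquiv,
    fun u v => (Fintype.orderIsoFinOfCardEq α rfl).symm.lt_iff_lt⟩

theorem Equiv.eq_of_lt_iff_lt {n : ℕ} {σ τ : α ≃ Fin n}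
    (h : ∀ u v, σ u < σ v ↔ τ u < τ v) : σ = τ := by
  have hmono : StrictMono (σ.symm.trans τ) := fun i j hij => by
    simpa using (h (σ.symm i) (σ.symm j)).1 (by simpa using hij)
  have := Subsingleton.elim (hmono.orderIsoOfSurjective _ (σ.symm.trans τ).surjective)
    (OrderIso.refl _)
  ext u
  simpa using congrArg (fun e : Fin n ≃o Fin n => (e (σ u) : ℕ)) this.symm

end FinEquiv

section InitialSegment

variable {α γ : Type*} [LinearOrder γ] (f : α → γ) (A : Finset α)

def IsInitialSegment (S : Finset α) : Prop :=
  S ⊆ A ∧ ∀ u ∈ S, ∀ w ∈ A, f w < f u → w ∈ S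

def segmentBelow : Option A → Finset α
  | none => ∅
  | some a => {u ∈ A | f u ≤ f a}

theorem isInitialSegment_segmentBelow (o : Option A) :
    IsInitialSegment f A (segmentBelow f A o) := by
  cases o with
  | none => simp [IsInitialSegment, segmentBelow]
  | some a =>
    refine ⟨filter_subset _ _, fun u hu w hw hwu => ?_⟩
    simp only [segmentBelow, mem_filter] at hu ⊢
    exact ⟨hw, hwu.le.trans hu.2⟩

variable {f A}

theorem segmentBelow_injective (hf : Injective f) : Injective (segmentBelow f A) := by
  have mem_self (a : A) : (a : α) ∈ segmentBelow f A (some a) := by simp [segmentBelow]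
  rintro (_ | a) (_ | b) hab
  · rfl
  · exact absurd (hab ▸ mem_self b) (notMem_empty _)
  · exact absurd (hab ▸ mem_self a) (notMem_empty _)
  · have hab' := hab ▸ mem_self a
    have hba := hab.symm ▸ mem_self b
    simp only [segmentBelow, mem_filter] at hab' hba
    rw [Subtype.ext (hf (le_antisymm hab'.2 hba.2))]

theorem exists_segmentBelow_eq (hf : Injective f) {S : Finset α}
    (hS : IsInitialSegment f A S) : ∃ o, segmentBelow f A o = S := by
  rcases S.eq_empty_or_nonempty with rfl | hne
  · exact ⟨none, rfl⟩
  obtain ⟨a, ha, hmax⟩ := S.exists_max_image f hne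
  refine ⟨some ⟨a, hS.1 ha⟩, ext fun u => ?_⟩
  simp only [segmentBelow, mem_filter]
  refine ⟨fun ⟨hu, hua⟩ => ?_, fun hu => ⟨hS.1 hu, hmax u hu⟩⟩
  rcases hua.lt_or_eq with hlt | heq
  · exact hS.2 a ha u hu hlt
  · exact hf heq ▸ ha

theorem card_isInitialSegment (hf : Injective f) :
    Nat.card {S // IsInitialSegment f A S} = #A + 1 := by
  have hbij : Bijective fun o => (⟨segmentBelow f A o, isInitialSegment_segmentBelow f A o⟩ :
      {S // IsInitialSegment f A S}) :=
    ⟨fun o o' h => segmentBelow_injective hf (congrArg Subtype.val h),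
      fun ⟨S, hS⟩ => (exists_segmentBelow_eq hf hS).imp fun _ h => Subtype.ext h⟩
  rw [← Nat.card_congr (Equiv.ofBijective _ hbij), Finite.card_option, Nat.card_eq_fintype_card,
    Fintype.card_coe]

end InitialSegment

section SplitGraph

variable {α β : Type*} (N : β → Finset α)

def splitGraph : SimpleGraph (α ⊕ β) where
  Adj a b :=
    match a, b with
    | .inl u, .inl v => u ≠ v
    | .inl u, .inr p => u ∈ N p
    | .inr p, .inl u => u ∈ N p
    | .inr _, .inr _ => False
  symm := by
    constructor
    rintro (u | p) (v | q) h
    exacts [Ne.symm h, h, h, h]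
  loopless := by
    constructor
    rintro (u | p) h
    exacts [h rfl, h]

variable {n : ℕ}

def splitOrientation (σ : α ≃ Fin n) (S : β → Finset α) : α ⊕ β → α ⊕ β → Prop
  | .inl u, .inl v => σ u < σ v
  | .inl u, .inr p => u ∈ S p
  | .inr p, .inl u => u ∈ N p ∧ u ∉ S p
  | .inr _, .inr _ => False

variable {N}

theorem isOrientation_splitOrientation {σ : α ≃ Fin n} {S : β → Finset α}
    (hS : ∀ p, S p ⊆ N p) : IsOrientation (splitGraph N) (splitOrientation N σ S) := by
  rintro (u | p) (v | q)
  · refine ⟨fun huv => ?_, fun huv h => huv fun he => (he ▸ h).false⟩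
    simp only [splitOrientation, not_lt]
    exact ⟨le_of_lt, fun h => h.lt_of_ne (σ.injective.ne huv)⟩
  · exact ⟨fun (hu : u ∈ N q) => by simp [splitOrientation, hu], fun hu h => hu (hS q h)⟩
  · exact ⟨fun (hv : v ∈ N p) => by simp [splitOrientation, hv], fun hv h => hv h.1⟩
  · exact ⟨False.elim, fun _ => id⟩

theorem relAcyclic_splitOrientation {σ : α ≃ Fin n} {S : β → Finset α}
    (hS : ∀ p, IsInitialSegment σ (N p) (S p)) : RelAcyclic (splitOrientation N σ S) := by
  -- each `p : β` is placed strictly between its in-neighbours and its out-neighbours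
  let height : α ⊕ β → ℕ
    | .inl u => 2 * σ u + 2
    | .inr p => 2 * (S p).sup (fun u => (σ u : ℕ) + 1) + 1
  refine relAcyclic_of_rel_imp_lt height ?_
  rintro (u | p) (v | q) h
  · exact Nat.add_lt_add_right (Nat.mul_lt_mul_of_pos_left h two_pos) 2
  · have := le_sup (f := fun u => (σ u : ℕ) + 1) h
    simp only [height]
    omega
  · obtain ⟨hv, hvS⟩ := h
    have : (S p).sup (fun u => (σ u : ℕ) + 1) ≤ σ v := by
      refine Finset.sup_le fun u hu => ?_
      by_contra! hle
      have hne : v ≠ u := fun he => hvS (he ▸ hu)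
      exact hvS ((hS p).2 u hu v hv
        (lt_of_le_of_ne (Fin.le_iff_val_le_val.2 (by omega)) (σ.injective.ne hne)))
    simp only [height]
    omega
  · exact h.elim

theorem splitOrientation_injective {σ τ : α ≃ Fin n} {S T : β → Finset α}
    (h : splitOrientation N σ S = splitOrientation N τ T) : σ = τ ∧ S = T :=
  ⟨Equiv.eq_of_lt_iff_lt fun u v => Iff.of_eq (congrFun₂ h (.inl u) (.inl v)),
    funext fun p => ext fun u => Iff.of_eq (congrFun₂ h (.inl u) (.inr p))⟩

theorem exists_splitOrientation_eq [Fintype α] {θ : α ⊕ β → α ⊕ β → Prop}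
    (hθ : IsOrientation (splitGraph N) θ) (hacyc : RelAcyclic θ) :
    ∃ (σ : α ≃ Fin (Fintype.card α)) (S : β → Finset α),
      (∀ p, IsInitialSegment σ (N p) (S p)) ∧ splitOrientation N σ S = θ := by
  classical
  have : IsStrictTotalOrder α fun u v => θ (.inl u) (.inl v) :=
    { irrefl := fun u => hacyc.irrefl _
      trans := fun u v w huv hvw => by
        by_contra huw
        have hne : u ≠ w := by rintro rfl; exact hacyc.asymm huv hvw
        exact hacyc.not_rel_of_rel_of_rel huv hvw (hθ.rel_of_not_rel hne huw)
      trichotomous := fun u v huv hvu => by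
        by_contra hne
        exact hvu (hθ.rel_of_not_rel hne huv) }
  obtain ⟨σ, hσ⟩ := exists_equiv_fin_lt_iff fun u v => θ (.inl u) (.inl v)
  refine ⟨σ, fun p => {u | θ (.inl u) (.inr p)}, fun p => ⟨fun u hu => ?_, ?_⟩, ?_⟩
  · exact hθ.adj (mem_filter.1 hu).2
  · intro u hu w hw hwu
    simp only [mem_filter, mem_univ, true_and] at hu ⊢
    by_contra hwp
    exact hacyc.not_rel_of_rel_of_rel ((hσ w u).1 hwu) hu (hθ.rel_of_not_rel hw hwp)
  · funext a b
    rcases a with u | p <;> rcases b with v | q <;> apply propext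
    · exact hσ u v
    · simp [splitOrientation]
    · simp only [splitOrientation, mem_filter, mem_univ, true_and]
      exact ⟨fun ⟨hu, hup⟩ => hθ.rel_of_not_rel hu hup,
        fun hpu => ⟨(hθ.adj hpu).symm, hacyc.asymm hpu⟩⟩
    · exact ⟨False.elim, (hθ _ _).2 id⟩

variable (N)

def SplitOrientationData [Fintype α] :=
  {x : (α ≃ Fin (Fintype.card α)) × (β → Finset α) //
    ∀ p, IsInitialSegment x.1 (N p) (x.2 p)}

noncomputable def splitOrientationEquiv [Fintype α] :
    SplitOrientationData N ≃
      {θ : α ⊕ β → α ⊕ β → Prop // IsOrientation (splitGraph N) θ ∧ RelAcyclic θ} :=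
  Equiv.ofBijective
    (fun x => ⟨splitOrientation N x.1.1 x.1.2,
      isOrientation_splitOrientation fun p => (x.2 p).1, relAcyclic_splitOrientation x.2⟩)
    ⟨fun _ _ h =>
        Subtype.ext (Prod.ext_iff.2 (splitOrientation_injective (congrArg Subtype.val h))),
      fun ⟨_, hθ, hacyc⟩ =>
        let ⟨σ, S, hS, h⟩ := exists_splitOrientation_eq hθ hacyc
        ⟨⟨(σ, S), hS⟩, Subtype.ext h⟩⟩

theorem numAcyclicOrientations_splitGraph [Fintype α] [DecidableEq α] [Fintype β] :
    numAcyclicOrientations (splitGraph N) = (Fintype.card α).factorial * ∏ p, (#(N p) + 1) := by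
  have e : SplitOrientationData N ≃
      Σ σ : α ≃ Fin (Fintype.card α), Π p, {S // IsInitialSegment σ (N p) S} :=
    (Equiv.subtypeProdEquivSigmaSubtype
      fun (σ : α ≃ Fin (Fintype.card α)) (S : β → Finset α) =>
        ∀ p, IsInitialSegment σ (N p) (S p)).trans
      (Equiv.sigmaCongrRight fun _ => Equiv.subtypePiEquivPi)
  rw [numAcyclicOrientations, ← Nat.card_congr (splitOrientationEquiv N), Nat.card_congr e,
    Nat.card_sigma]
  simp only [Nat.card_pi, card_isInitialSegment (Equiv.injective _), sum_const, card_univ,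
    Fintype.card_equiv (Fintype.equivFin α), smul_eq_mul]

end SplitGraph

theorem graphH_eq_splitGraph (k : ℕ) (ns : ℕ → ℕ) :
    graphH k ns = splitGraph fun p : Σ i : Fin k, Fin (ns i) => Iio p.1 := by
  ext (u | p) (v | q) <;> simp [graphH, splitGraph]

theorem numAcyclicOrientations_graphH (k : ℕ) (ns : ℕ → ℕ) :
    numAcyclicOrientations (graphH k ns) = ∏ i ∈ range k, (i + 1) ^ (ns i + 1) := by
  rw [graphH_eq_splitGraph, numAcyclicOrientations_splitGraph, Fintype.card_fin,
    Fintype.prod_sigma]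
  simp only [Fin.card_Iio, prod_const, card_univ, Fintype.card_fin]
  rw [Fin.prod_univ_eq_prod_range (fun i => (i + 1) ^ ns i), ← prod_range_add_one_eq_factorial,
    ← prod_mul_distrib]
  simp only [pow_succ, mul_comm]

theorem numAcyclicOrientations_graphH_eq_prod_range {k M : ℕ} {ns : ℕ → ℕ} (hkM : k ≤ M)
    (hns : ∀ i, k ≤ i → ns i = 0) :
    numAcyclicOrientations (graphH k ns)
      = ∏ i ∈ range M, (i + 1) ^ (ns i + if i < k then 1 else 0) := by
  rw [numAcyclicOrientations_graphH, ← prod_range_mul_prod_Ico _ hkM]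
  have hlow : ∀ i ∈ range k, (i + 1) ^ (ns i + if i < k then 1 else 0) = (i + 1) ^ (ns i + 1) :=
    fun i hi => by rw [if_pos (mem_range.1 hi)]
  have hhigh : ∀ i ∈ Ico k M, (i + 1) ^ (ns i + if i < k then 1 else 0) = 1 := fun i hi => by
    rw [hns i (mem_Ico.1 hi).1, if_neg (mem_Ico.1 hi).1.not_gt, pow_zero]
  rw [prod_congr rfl hlow, prod_eq_one hhigh, mul_one]

theorem prod_pow_add_ite_eq_mul {ι M : Type*} [DecidableEq ι] [CommMonoid M] {s : Finset ι}
    {j : ι} (hj : j ∈ s) (g : ι → M) (e : ι → ℕ) :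
    ∏ i ∈ s, g i ^ (e i + if i = j then 1 else 0) = (∏ i ∈ s, g i ^ e i) * g j := by
  simp only [pow_add, prod_mul_distrib, pow_ite, pow_one, pow_zero, prod_ite_eq', if_pos hj]

section Consolidation

variable {k : ℕ} {ns : ℕ → ℕ} {s l : ℕ}

theorem IsConsolData.one_le_and_le_and_lt (h : IsConsolData k ns s l) :
    1 ≤ s ∧ s ≤ l ∧ l < k := by
  obtain ⟨-, hbig, hsum, hs1, -, hmin, hl, hmax⟩ := h
  have hlk : l < k := by_contra fun hkl => hl (hbig l (not_lt.1 hkl))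
  have hl1 : 1 ≤ l := by
    by_contra! hl0
    rw [sum_eq_zero fun i hi => hmax i (by grind) (mem_Ico.1 hi).2] at hsum
    omega
  exact ⟨hs1, not_lt.1 fun hls => hl (hmin l hl1 hls), hlk⟩

theorem IsConsolData.two_le_of_eq (h : IsConsolData k ns s l) (hsl : s = l) : 2 ≤ ns s := by
  have hsk : s < k := hsl ▸ h.one_le_and_le_and_lt.2.2
  obtain ⟨-, -, hsum, hs1, -, hmin, -, hmax⟩ := h
  rwa [sum_eq_single_of_mem s (mem_Ico.2 ⟨hs1, hsk⟩) fun i hi his =>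
    (Nat.lt_or_gt_of_ne his).elim (hmin i (mem_Ico.1 hi).1) fun hsi =>
      hmax i (hsl ▸ hsi) (mem_Ico.1 hi).2] at hsum

theorem consolNs_eq_zero (h : IsConsolData k ns s l) {i : ℕ} (hi : k ≤ i) :
    consolNs k ns s l i = 0 := by
  obtain ⟨-, hsl, hlk⟩ := h.one_le_and_le_and_lt
  simp only [consolNs, h.2.1 i hi]
  split_ifs <;> omega

theorem consolNs_add_ite (h : IsConsolData k ns s l) (i : ℕ) :
    consolNs k ns s l i + (if i < consolK k l then 1 else 0) + (if i = s then 1 else 0)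
        + (if i = l then 1 else 0)
      = ns i + (if i < k then 1 else 0) + (if i = s - 1 then 1 else 0)
        + (if i = l + 1 then 1 else 0) := by
  obtain ⟨hs1, hsl, hlk⟩ := h.one_le_and_le_and_lt
  have hsl2 : s = l → 2 ≤ ns s := h.two_le_of_eq
  obtain ⟨-, hbig, -, -, hs, -, hl, -⟩ := h
  have hbig := hbig i
  simp only [consolNs, consolK]
  rcases eq_or_ne i s with rfl | his <;> rcases eq_or_ne i l with rfl | hil <;>
    split_ifs <;> omega

theorem numAcyclicOrientations_consolidation_mul (h : IsConsolData k ns s l) :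
    numAcyclicOrientations (graphH (consolK k l) (consolNs k ns s l)) * ((s + 1) * (l + 1))
      = numAcyclicOrientations (graphH k ns) * (s * (l + 2)) := by
  obtain ⟨hs1, hsl, hlk⟩ := h.one_le_and_le_and_lt
  have hkK : k ≤ consolK k l := by unfold consolK; split_ifs <;> omega
  have hKk : consolK k l ≤ k + 1 := by unfold consolK; split_ifs <;> omega
  rw [numAcyclicOrientations_graphH_eq_prod_range hKk fun i hi =>
      consolNs_eq_zero h (hkK.trans hi),
    numAcyclicOrientations_graphH_eq_prod_range (M := k + 1) k.le_succ h.2.1]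
  calc _ = ∏ i ∈ range (k + 1), (i + 1) ^ (consolNs k ns s l i
          + (if i < consolK k l then 1 else 0) + (if i = s then 1 else 0)
          + (if i = l then 1 else 0)) := by
        rw [prod_pow_add_ite_eq_mul (mem_range.2 (by omega)),
          prod_pow_add_ite_eq_mul (mem_range.2 (by omega)), mul_assoc]
    _ = ∏ i ∈ range (k + 1), (i + 1) ^ (ns i + (if i < k then 1 else 0)
          + (if i = s - 1 then 1 else 0) + (if i = l + 1 then 1 else 0)) :=
        prod_congr rfl fun i _ => by rw [consolNs_add_ite h]
    _ = _ := by
        rw [prod_pow_add_ite_eq_mul (mem_range.2 (by omega)),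
          prod_pow_add_ite_eq_mul (mem_range.2 (by omega)), Nat.sub_add_cancel hs1, mul_assoc]

end Consolidation

/-- The number of acyclic orientations is strictly decreased by (nontrivial) consolidation:
`a(G') < a(G)`. -/
theorem consolidation_lt_numAcyclicOrientations (k : ℕ) (ns : ℕ → ℕ) (s l : ℕ)
    (h : IsConsolData k ns s l) :
    numAcyclicOrientations (graphH (consolK k l) (consolNs k ns s l))
      < numAcyclicOrientations (graphH k ns) := by
  obtain ⟨-, hsl, -⟩ := h.one_le_and_le_and_lt
  have hpos : 0 < numAcyclicOrientations (graphH k ns) := by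
    rw [numAcyclicOrientations_graphH]
    positivity
  have hlt : numAcyclicOrientations (graphH k ns) * (s * (l + 2))
      < numAcyclicOrientations (graphH k ns) * ((s + 1) * (l + 1)) :=
    Nat.mul_lt_mul_of_pos_left (by nlinarith) hpos
  exact Nat.lt_of_mul_lt_mul_right (numAcyclicOrientations_consolidation_mul h ▸ hlt)
end

section
/- Let n, m be natural numbers with 0 < m ≤ C(n,2), let k be the largest integer with m > C(k,2), and suppose m ≠ C(k,2) + 1. Then a finite simple graph G with n vertices and m edges has exactly n − k connected components (the maximum possible) if and only if G has a single connected component on k+1 vertices containing all m edges and n − k − 1 isolated vertices. -/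
/-!
Write the component sizes as `aᵢ + 1`. With `c` components, `∑ aᵢ = n - c`, and since a vertex
has fewer neighbours than its component has vertices, the handshake lemma bounds the number of
edges by `∑ C(aᵢ + 1, 2)`. When `c = n - k` we get `∑ aᵢ = k`. If no `aᵢ` equals `k`, split off
one positive `aᵢ = a` and merge the others by superadditivity of `x ↦ C(x + 1, 2)`: there are at
most `C(a + 1, 2) + C(k - a + 1, 2) ≤ C(k, 2) + 1` edges, which the hypotheses on `m` exclude.
So some component has `k + 1` vertices and all the others are singletons.
-/

open Finset

namespace Nat

theorem add_choose_two (x y : ℕ) : (x + y).choose 2 = x.choose 2 + y.choose 2 + x * y := by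
  induction y with
  | zero => simp
  | succ y ih =>
    rw [← add_assoc, choose_succ_succ', ih, choose_succ_succ' y, choose_one_right,
      choose_one_right]
    ring

theorem succ_choose_two_add_succ_choose_two_le (a b : ℕ) :
    (a + 1).choose 2 + (b + 1).choose 2 ≤ (a + b + 1).choose 2 := by
  rw [add_right_comm, add_choose_two (a + 1) b, choose_succ_succ' b, choose_one_right]
  nlinarith

theorem succ_choose_two_add_succ_choose_two_le_of_pos {a b : ℕ} (ha : 0 < a) (hb : 0 < b) :
    (a + 1).choose 2 + (b + 1).choose 2 ≤ (a + b).choose 2 + 1 := by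
  rw [add_choose_two a b, choose_succ_succ' a, choose_succ_succ' b, choose_one_right,
    choose_one_right]
  nlinarith

end Nat

namespace Finset

variable {ι : Type*}

theorem sum_succ_choose_two_le (s : Finset ι) (a : ι → ℕ) :
    ∑ i ∈ s, (a i + 1).choose 2 ≤ (∑ i ∈ s, a i + 1).choose 2 := by
  classical
  induction s using Finset.induction_on with
  | empty => simp
  | insert i s hi ih =>
    rw [sum_insert hi, sum_insert hi]
    exact (Nat.add_le_add_left ih _).trans (Nat.succ_choose_two_add_succ_choose_two_le _ _)

theorem exists_eq_sum_of_sum_choose_two_lt (s : Finset ι) (a : ι → ℕ)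
    (h : (∑ i ∈ s, a i).choose 2 + 1 < ∑ i ∈ s, (a i + 1).choose 2) :
    ∃ i ∈ s, a i = ∑ j ∈ s, a j := by
  classical
  by_contra! hne
  obtain ⟨i, hi, hai⟩ : ∃ i ∈ s, 0 < a i := by
    by_contra! hzero
    have : ∑ i ∈ s, (a i + 1).choose 2 = 0 :=
      sum_eq_zero fun i hi => by simp [Nat.le_zero.1 (hzero i hi)]
    omega
  have hsplit := add_sum_erase s a hi
  have hrest : 0 < ∑ j ∈ s.erase i, a j := by
    have := hne i hi
    omega
  refine h.not_ge ?_
  calc ∑ j ∈ s, (a j + 1).choose 2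
      = (a i + 1).choose 2 + ∑ j ∈ s.erase i, (a j + 1).choose 2 :=
        (add_sum_erase s _ hi).symm
    _ ≤ (a i + 1).choose 2 + (∑ j ∈ s.erase i, a j + 1).choose 2 :=
        Nat.add_le_add_left (sum_succ_choose_two_le _ _) _
    _ ≤ (∑ j ∈ s, a j).choose 2 + 1 := by
        rw [← hsplit]
        exact Nat.succ_choose_two_add_succ_choose_two_le_of_pos hai hrest

end Finset

namespace SimpleGraph

variable {V : Type*}

section

variable {G : SimpleGraph V}

theorem ConnectedComponent.card_supp_pos [Finite V] (C : G.ConnectedComponent) :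
    0 < Nat.card C.supp :=
  have := C.nonempty_supp.to_subtype
  Nat.card_pos

theorem card_supp_connectedComponentMk_eq_one_iff {v : V} :
    Nat.card (G.connectedComponentMk v).supp = 1 ↔ ∀ w, ¬ G.Adj v w := by
  constructor
  · intro h w hadj
    have hv : v ∈ (G.connectedComponentMk v).supp := (ConnectedComponent.mem_supp_iff _ _).2 rfl
    have hw : w ∈ (G.connectedComponentMk v).supp :=
      (ConnectedComponent.mem_supp_iff _ _).2
        (ConnectedComponent.connectedComponentMk_eq_of_adj hadj).symm
    exact hadj.ne (congrArg Subtype.val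
      ((Nat.card_eq_one_iff_unique.1 h).1.elim ⟨v, hv⟩ ⟨w, hw⟩))
  · intro h
    have hsupp : (G.connectedComponentMk v).supp = {v} := by
      ext w
      rw [ConnectedComponent.mem_supp_iff, Set.mem_singleton_iff]
      refine ⟨fun hw => ?_, fun hw => hw ▸ rfl⟩
      by_contra hne
      exact not_reachable_of_neighborSet_left_eq_empty (Ne.symm hne)
        (Set.eq_empty_of_forall_notMem h) (ConnectedComponent.eq.1 hw.symm)
    rw [hsupp, Nat.card_unique]

theorem ConnectedComponent.forall_ne_card_supp_eq_one_iff (C : G.ConnectedComponent) :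
    (∀ D, D ≠ C → Nat.card D.supp = 1) ↔ ∀ v ∉ C.supp, ∀ w, ¬ G.Adj v w := by
  constructor
  · intro h v hv
    exact card_supp_connectedComponentMk_eq_one_iff.1 (h _ (mt (C.mem_supp_iff v).2 hv))
  · intro h D hD
    obtain ⟨v, rfl⟩ := D.exists_rep
    exact card_supp_connectedComponentMk_eq_one_iff.2 (h v (mt (C.mem_supp_iff v).1 hD))

end

section Fintype

variable [Fintype V] [DecidableEq V] (G : SimpleGraph V) [DecidableRel G.Adj]

theorem sum_comp_connectedComponentMk {M : Type*} [AddCommMonoid M]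
    (f : G.ConnectedComponent → M) :
    ∑ v, f (G.connectedComponentMk v) = ∑ C, Nat.card C.supp • f C := by
  classical
  rw [← sum_fiberwise univ G.connectedComponentMk]
  refine sum_congr rfl fun C _ => ?_
  rw [sum_congr rfl fun v hv => congrArg f (mem_filter.1 hv).2, sum_const,
    Nat.card_eq_card_toFinset]
  congr
  ext v
  simp [ConnectedComponent.mem_supp_iff]

theorem sum_card_supp : ∑ C : G.ConnectedComponent, Nat.card C.supp = Fintype.card V := by
  have h := G.sum_comp_connectedComponentMk fun _ => (1 : ℕ)
  simp only [smul_eq_mul, mul_one] at h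
  rw [← h, Fintype.card_eq_sum_ones]

theorem sum_card_supp_sub_one_add_card :
    ∑ C : G.ConnectedComponent, (Nat.card C.supp - 1) + Fintype.card G.ConnectedComponent =
      Fintype.card V := by
  rw [Fintype.card_eq_sum_ones (α := G.ConnectedComponent), ← sum_add_distrib,
    ← G.sum_card_supp]
  exact sum_congr rfl fun C _ => Nat.sub_add_cancel C.card_supp_pos

theorem degree_lt_card_supp (v : V) :
    G.degree v < Nat.card (G.connectedComponentMk v).supp := by
  have hsub : ((insert v (G.neighborFinset v) : Finset V) : Set V) ⊆
      (G.connectedComponentMk v).supp := by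
    intro w hw
    rw [coe_insert, Set.mem_insert_iff, coe_neighborFinset, mem_neighborSet] at hw
    rw [ConnectedComponent.mem_supp_iff]
    rcases hw with rfl | hadj
    · rfl
    · exact (ConnectedComponent.connectedComponentMk_eq_of_adj hadj).symm
  calc G.degree v < #(insert v (G.neighborFinset v)) := by
        rw [card_insert_of_notMem (by simp), card_neighborFinset_eq_degree]
        exact Nat.lt_succ_self _
    _ ≤ _ := by
        rw [← Set.ncard_coe_finset, ← Nat.card_coe_set_eq]
        exact Nat.card_mono (Set.toFinite _) hsub

theorem card_edgeSet_le_sum_choose_two :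
    Nat.card G.edgeSet ≤ ∑ C : G.ConnectedComponent, (Nat.card C.supp).choose 2 := by
  refine Nat.le_of_mul_le_mul_left ?_ two_pos
  calc 2 * Nat.card G.edgeSet = ∑ v, G.degree v := by
        rw [sum_degrees_eq_twice_card_edges, edgeFinset_card, Nat.card_eq_fintype_card]
    _ ≤ ∑ v, (Nat.card (G.connectedComponentMk v).supp - 1) :=
        sum_le_sum fun v _ => Nat.le_sub_one_of_lt (G.degree_lt_card_supp v)
    _ = ∑ C : G.ConnectedComponent, Nat.card C.supp * (Nat.card C.supp - 1) :=
        G.sum_comp_connectedComponentMk fun C => Nat.card C.supp - 1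
    _ = 2 * ∑ C : G.ConnectedComponent, (Nat.card C.supp).choose 2 := by
        rw [mul_sum]
        refine sum_congr rfl fun C _ => ?_
        rw [Nat.choose_two_right, Nat.mul_div_cancel' (Nat.even_mul_pred_self _).two_dvd]

theorem sum_card_supp_sub_one_eq_of_forall_ne {C : G.ConnectedComponent}
    (h : ∀ D, D ≠ C → Nat.card D.supp = 1) :
    ∑ D : G.ConnectedComponent, (Nat.card D.supp - 1) = Nat.card C.supp - 1 :=
  sum_eq_single_of_mem C (mem_univ C) fun D _ hD => by rw [h D hD, Nat.sub_self]

theorem exists_card_supp_eq_of_choose_two_add_one_lt {k : ℕ}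
    (hk : ∑ C : G.ConnectedComponent, (Nat.card C.supp - 1) = k)
    (hE : k.choose 2 + 1 < Nat.card G.edgeSet) :
    ∃ C : G.ConnectedComponent,
      Nat.card C.supp = k + 1 ∧ ∀ D, D ≠ C → Nat.card D.supp = 1 := by
  classical
  have hsucc (C : G.ConnectedComponent) : Nat.card C.supp - 1 + 1 = Nat.card C.supp :=
    Nat.sub_add_cancel C.card_supp_pos
  obtain ⟨C, -, hC⟩ := univ.exists_eq_sum_of_sum_choose_two_lt
    (fun C : G.ConnectedComponent => Nat.card C.supp - 1) <| by
      simp only [hsucc, hk]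
      exact hE.trans_le G.card_edgeSet_le_sum_choose_two
  refine ⟨C, by rw [← hsucc C, hC, hk], fun D hD => ?_⟩
  have hrest : ∑ D ∈ univ.erase C, (Nat.card D.supp - 1) = 0 := by
    have := add_sum_erase univ (fun D : G.ConnectedComponent => Nat.card D.supp - 1) (mem_univ C)
    omega
  have := sum_eq_zero_iff.1 hrest D (mem_erase.2 ⟨hD, mem_univ D⟩)
  have := D.card_supp_pos
  omega

end Fintype

end SimpleGraph

open SimpleGraph

theorem max_connectedComponents_iff_general (n m k : ℕ) (hm : m ≤ n * (n - 1) / 2)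
    (hk1 : k * (k - 1) / 2 < m) (hne : m ≠ k * (k - 1) / 2 + 1)
    (G : SimpleGraph (Fin n)) (hG : Nat.card G.edgeSet = m) :
    Nat.card G.ConnectedComponent = n - k ↔
      ∃ C : G.ConnectedComponent, Nat.card C.supp = k + 1 ∧
        ∀ v : Fin n, v ∉ C.supp → ∀ w : Fin n, ¬ G.Adj v w := by
  classical
  rw [← Nat.choose_two_right] at hm hk1 hne
  have hkn : k < n := lt_of_not_ge fun h => (Nat.choose_le_choose 2 h).not_gt (hk1.trans_le hm)
  have hcount := G.sum_card_supp_sub_one_add_card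
  rw [Fintype.card_fin] at hcount
  simp_rw [← ConnectedComponent.forall_ne_card_supp_eq_one_iff,
    Nat.card_eq_fintype_card (α := G.ConnectedComponent)]
  constructor
  · intro hc
    exact G.exists_card_supp_eq_of_choose_two_add_one_lt (by omega) (by omega)
  · rintro ⟨C, hC, hsingle⟩
    have := G.sum_card_supp_sub_one_eq_of_forall_ne hsingle
    omega

/-- Let `k` be the largest integer with `m > C(k,2)`, where `0 < m ≤ C(n,2)`, and suppose
`m ≠ C(k,2) + 1`.  A graph `G` with `n` vertices and `m` edges has exactly `n - k` connected
components (the maximum possible) iff `G` has a single connected component on `k + 1` vertices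
containing all `m` edges, all the other vertices being isolated. -/
theorem max_connectedComponents_iff (n m k : ℕ) (hm0 : 0 < m) (hm : m ≤ n * (n - 1) / 2)
    (hk1 : k * (k - 1) / 2 < m) (hk2 : m ≤ (k + 1) * k / 2) (hne : m ≠ k * (k - 1) / 2 + 1)
    (G : SimpleGraph (Fin n)) (hG : Nat.card G.edgeSet = m) :
    Nat.card G.ConnectedComponent = n - k ↔
      ∃ C : G.ConnectedComponent, Nat.card C.supp = k + 1 ∧
        ∀ v : Fin n, v ∉ C.supp → ∀ w : Fin n, ¬ G.Adj v w :=
  max_connectedComponents_iff_general n m k hm hk1 hne G hG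
end
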